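/- Let H be a minor of G with branch sets (V_h), and let T' be a tangle of order θ in H. Define T as the set of all separations (A,B) of G of order < θ whose induced separation (A',B') in H (with A' = {h : V_h∩A ≠ ∅}, B' = {h : V_h∩B ≠ ∅}) lies in T'. Then T is a tangle of order θ in G. -/

import Mathlib

/-- `(A,B)` is a separation of `G`. -/
def IsSeparation {V : Type*} [Fintype V] [DecidableEq V]
    (G : SimpleGraph V) (A B : Finset V) : Prop :=
  A ∪ B = Finset.univ ∧
    ∀ a ∈ A, a ∉ B → ∀ b ∈ B, b ∉ A → ¬ G.Adj a b

/-- `T` is a tangle of order `θ` in `G`: it consists of separations of order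
`< θ`; every separation of order `< θ` has exactly one orientation in `T`; and
no three small sides of members of `T` cover the vertex set. -/
def IsTangle {V : Type*} [Fintype V] [DecidableEq V]
    (G : SimpleGraph V) (θ : ℕ) (T : Finset V → Finset V → Prop) : Prop :=
  (∀ A B, T A B → IsSeparation G A B ∧ (A ∩ B).card < θ) ∧
  (∀ A B, IsSeparation G A B → (A ∩ B).card < θ → Xor' (T A B) (T B A)) ∧
  (∀ A₁ B₁ A₂ B₂ A₃ B₃, T A₁ B₁ → T A₂ B₂ → T A₃ B₃ → A₁ ∪ A₂ ∪ A₃ ≠ Finset.univ)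

/-- Minor model of `H` in `G`. -/
def IsMinorModel {V W : Type*} [Fintype V] [DecidableEq V]
    (G : SimpleGraph V) (H : SimpleGraph W) (M : W → Finset V) : Prop :=
  (∀ h, (M h).Nonempty) ∧
  (∀ h, (G.induce (M h : Set V)).Connected) ∧
  (∀ h h', h ≠ h' → Disjoint (M h) (M h')) ∧
  (∀ h h', H.Adj h h' → ∃ a ∈ M h, ∃ b ∈ M h', G.Adj a b)

/-!
Each branch set `V_h` is connected, so if it meets both sides of a separation `(A, B)` of `G`
it meets `A ∩ B`; as the branch sets are disjoint, the induced separation of `H` has order at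
most `|A ∩ B|`. Hence every separation of `G` of order `< θ` induces one of `H` of order `< θ`,
which `T'` orients, and this orientation is pulled back. The induced side of a union is the union
of the induced sides, and the induced side of `V(G)` is `V(H)`, so three small sides covering
`V(G)` would induce three small sides of `T'` covering `V(H)`.
-/

open Finset

section

variable {V W : Type*} [DecidableEq V]

namespace IsSeparation

variable [Fintype V] {G : SimpleGraph V} {A B : Finset V}

lemma symm (h : IsSeparation G A B) : IsSeparation G B A :=
  ⟨by rw [union_comm, h.1], fun b hb hbA a ha haB hab => h.2 a ha haB b hb hbA hab.symm⟩

lemma mem_or_mem (h : IsSeparation G A B) (x : V) : x ∈ A ∨ x ∈ B :=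
  mem_union.1 (h.1 ▸ mem_univ x)

lemma mem_right_of_adj (h : IsSeparation G A B) {a b : V} (hab : G.Adj a b)
    (ha : a ∈ A) (hb : b ∉ A) : a ∈ B := by
  by_contra haB
  exact h.2 a ha haB b ((h.mem_or_mem b).resolve_left hb) hb hab

lemma exists_mem_inter_of_connected (h : IsSeparation G A B) {S : Set V}
    (hS : (G.induce S).Connected) {a b : V} (haS : a ∈ S) (hbS : b ∈ S)
    (ha : a ∈ A) (hb : b ∈ B) : ∃ x ∈ S, x ∈ A ∧ x ∈ B := by
  by_cases hbA : b ∈ A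
  · exact ⟨b, hbS, hbA, hb⟩
  obtain ⟨p⟩ := hS.preconnected ⟨a, haS⟩ ⟨b, hbS⟩
  obtain ⟨d, -, hd₁, hd₂⟩ := p.exists_boundary_dart {x | (x : V) ∈ A} ha hbA
  exact ⟨d.fst, d.fst.2, hd₁, h.mem_right_of_adj d.adj hd₁ hd₂⟩

lemma subset_sdiff_of_disjoint (h : IsSeparation G A B) {S : Finset V} (hS : Disjoint S B) :
    S ⊆ A \ B := fun x hx =>
  mem_sdiff.2 ⟨(h.mem_or_mem x).resolve_right (disjoint_left.1 hS hx), disjoint_left.1 hS hx⟩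

end IsSeparation

/-- The side `A' = {h | V_h ∩ A ≠ ∅}` of `H` induced by a side `A` of `G`. -/
def branchTrace [Fintype W] (M : W → Finset V) (A : Finset V) : Finset W :=
  univ.filter fun h => (M h ∩ A).Nonempty

section BranchTrace

variable [Fintype W] {M : W → Finset V}

@[simp]
lemma mem_branchTrace {A : Finset V} {h : W} : h ∈ branchTrace M A ↔ (M h ∩ A).Nonempty := by
  simp [branchTrace]

lemma notMem_branchTrace {A : Finset V} {h : W} : h ∉ branchTrace M A ↔ Disjoint (M h) A := by
  rw [mem_branchTrace, not_nonempty_iff_eq_empty, disjoint_iff_inter_eq_empty]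

lemma branchTrace_union [DecidableEq W] (A B : Finset V) :
    branchTrace M (A ∪ B) = branchTrace M A ∪ branchTrace M B := by
  ext h
  simp [inter_union_distrib_left, union_nonempty]

lemma branchTrace_univ [Fintype V] (hM : ∀ h, (M h).Nonempty) : branchTrace M univ = univ := by
  ext h
  simpa using hM h

end BranchTrace

namespace IsMinorModel

variable [Fintype V] [Fintype W] {G : SimpleGraph V} {H : SimpleGraph W} {M : W → Finset V}
  {A B : Finset V}

lemma isSeparation_branchTrace [DecidableEq W] (hM : IsMinorModel G H M)
    (hsep : IsSeparation G A B) :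
    IsSeparation H (branchTrace M A) (branchTrace M B) := by
  refine ⟨?_, fun h _ hB h' _ hA hhh' => ?_⟩
  · rw [← branchTrace_union, hsep.1, branchTrace_univ hM.1]
  · obtain ⟨a, ha, b, hb, hab⟩ := hM.2.2.2 h h' hhh'
    obtain ⟨haA, haB⟩ :=
      mem_sdiff.1 (hsep.subset_sdiff_of_disjoint (notMem_branchTrace.1 hB) ha)
    obtain ⟨hbB, hbA⟩ :=
      mem_sdiff.1 (hsep.symm.subset_sdiff_of_disjoint (notMem_branchTrace.1 hA) hb)
    exact hsep.2 a haA haB b hbB hbA hab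

lemma card_inter_branchTrace_le [DecidableEq W] (hM : IsMinorModel G H M)
    (hsep : IsSeparation G A B) :
    #(branchTrace M A ∩ branchTrace M B) ≤ #(A ∩ B) := by
  have hmeet : ∀ h ∈ branchTrace M A ∩ branchTrace M B, (M h ∩ (A ∩ B)).Nonempty := by
    intro h hh
    simp only [mem_inter, mem_branchTrace, Finset.Nonempty] at hh
    obtain ⟨⟨a, haM, haA⟩, b, hbM, hbB⟩ := hh
    obtain ⟨x, hx, hxA, hxB⟩ :=
      hsep.exists_mem_inter_of_connected (hM.2.1 h) (mem_coe.2 haM) (mem_coe.2 hbM) haA hbB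
    exact ⟨x, mem_inter.2 ⟨hx, mem_inter.2 ⟨hxA, hxB⟩⟩⟩
  have hdisj : ((branchTrace M A ∩ branchTrace M B : Finset W) : Set W).PairwiseDisjoint
      fun h => M h ∩ (A ∩ B) :=
    fun h _ h' _ hne => (hM.2.2.1 h h' hne).mono inter_subset_left inter_subset_left
  calc #(branchTrace M A ∩ branchTrace M B)
      ≤ #((branchTrace M A ∩ branchTrace M B).biUnion fun h => M h ∩ (A ∩ B)) :=
        card_le_card_biUnion hdisj hmeet
    _ ≤ #(A ∩ B) := card_le_card (biUnion_subset.2 fun _ _ => inter_subset_right)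

end IsMinorModel

end

/-- Given a minor model of `H` in `G` and a tangle `T'` of order `θ` in `H`,
the set `T` of all separations `(A,B)` of `G` of order `< θ` whose induced
separation in `H` lies in `T'` is a tangle of order `θ` in `G`. -/
theorem tangle_extension {V W : Type*} [Fintype V] [DecidableEq V]
    [Fintype W] [DecidableEq W]
    (G : SimpleGraph V) (H : SimpleGraph W) (M : W → Finset V)
    (hM : IsMinorModel G H M) (θ : ℕ) (T' : Finset W → Finset W → Prop)
    (hT' : IsTangle H θ T') :
    IsTangle G θ (fun A B =>
      IsSeparation G A B ∧ (A ∩ B).card < θ ∧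
      T' (Finset.univ.filter fun h => (M h ∩ A).Nonempty)
         (Finset.univ.filter fun h => (M h ∩ B).Nonempty)) := by
  change IsTangle G θ fun A B =>
    IsSeparation G A B ∧ #(A ∩ B) < θ ∧ T' (branchTrace M A) (branchTrace M B)
  refine ⟨fun A B hAB => ⟨hAB.1, hAB.2.1⟩, fun A B hsep hord => ?_, ?_⟩
  · have hord' := (hM.card_inter_branchTrace_le hsep).trans_lt hord
    rcases hT'.2.1 _ _ (hM.isSeparation_branchTrace hsep) hord' with ⟨hAB, hBA⟩ | ⟨hBA, hAB⟩
    · exact Or.inl ⟨⟨hsep, hord, hAB⟩, fun h => hBA h.2.2⟩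
    · exact Or.inr ⟨⟨hsep.symm, by rwa [inter_comm], hBA⟩, fun h => hAB h.2.2⟩
  · intro A₁ B₁ A₂ B₂ A₃ B₃ h₁ h₂ h₃ hcover
    refine hT'.2.2 _ _ _ _ _ _ h₁.2.2 h₂.2.2 h₃.2.2 ?_
    rw [← branchTrace_union, ← branchTrace_union, hcover, branchTrace_univ hM.1]
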